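/- arXiv:2312.15933 — 3 statements merged into one kernel-verified Lean document; each statement's English description precedes it below -/
import Mathlib

section
/- Let n ∈ ℕ and q_+, q_− ∈ W^n_1[0,1]. Define a_k^±, b_k^± by the recurrences a_0^± = 0, b_0^± = 1, a_k^± = q_∓ b_{k−1}^± − (a_{k−1}^±)', b_k^±(x) = ∫_0^x q_±(t) a_k^±(t) dt (1 ≤ k ≤ n), and define σ_k^± on [0,1] by σ_k^± = a_k^± − Σ_{j=1}^{k−1} b_j^± σ_{k−j}^± for 1 ≤ k ≤ n. Then σ_1^± = q_∓, and for every 1 ≤ k ≤ n−1 and every x ∈ [0,1]: σ_{k+1}^±(x) = −(σ_k^±)'(x) − q_±(x) · Σ_{j=1}^{k−1} σ_j^±(x) σ_{k−j}^±(x). -/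
open MeasureTheory Set Filter

noncomputable section

/-- The unit interval `[0,1]` as a subset of `ℝ`. -/
def I01 : Set ℝ := Set.Icc 0 1

/-- Lebesgue measure restricted to `[0,1]`. -/
def mu01 : MeasureTheory.Measure ℝ := MeasureTheory.volume.restrict I01

/-- `f ∈ W^n_1[0,1]`: the derivatives of `f` up to order `n-1` exist and are continuous on
`[0,1]`, and the `(n-1)`-st derivative is absolutely continuous, i.e. an indefinite integral
of an integrable function (its a.e.-derivative `f⁽ⁿ⁾ ∈ L¹[0,1]`). -/
def MemW1 (n : ℕ) (f : ℝ → ℂ) : Prop :=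
  ContDiffOn ℝ (n - 1 : ℕ) f I01 ∧
  ∃ g : ℝ → ℂ, MeasureTheory.IntegrableOn g I01 ∧
    ∀ x ∈ I01, iteratedDerivWithin (n - 1) f I01 x
      = iteratedDerivWithin (n - 1) f I01 0 + ∫ t in (0:ℝ)..x, g t

/-- `Jdet a j k` is the minor `J_{(j+1)(k+1)} = a_{1,j} a_{2,k} - a_{1,k} a_{2,j}` of the
boundary coefficient matrix (`0`-based indices). -/
def Jdet (a : Fin 2 → Fin 4 → ℂ) (j k : Fin 4) : ℂ := a 0 j * a 1 k - a 0 k * a 1 j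

/-- `y` satisfies the two-point boundary conditions `U_j(y) = 0`, `j = 1, 2`. -/
def SatisfiesBC (a : Fin 2 → Fin 4 → ℂ) (y : ℝ → ℂ × ℂ) : Prop :=
  ∀ j : Fin 2, a j 0 * (y 0).1 + a j 1 * (y 0).2 + a j 2 * (y 1).1 + a j 3 * (y 1).2 = 0

/-- `y` is absolutely continuous on `[0,1]` (an indefinite integral of an integrable `g`,
which is then its a.e. derivative) and satisfies `-i B⁻¹ y' + Q y = rhs` a.e. on `[0,1]`. -/
def SolvesDirac (b₁ b₂ : ℝ) (Q12 Q21 : ℝ → ℂ) (y rhs : ℝ → ℂ × ℂ) : Prop :=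
  ∃ g : ℝ → ℂ × ℂ, MeasureTheory.IntegrableOn g I01 ∧
    (∀ x ∈ I01, y x = y 0 + ∫ t in (0:ℝ)..x, g t) ∧
    (∀ᵐ x ∂mu01,
      (-Complex.I) * (b₁ : ℂ)⁻¹ * (g x).1 + Q12 x * (y x).2 = (rhs x).1 ∧
      (-Complex.I) * (b₂ : ℂ)⁻¹ * (g x).2 + Q21 x * (y x).1 = (rhs x).2)

/-- `y` is a root function of the boundary value problem: a member of a chain
`ch 0, …, ch m` of absolutely continuous functions satisfying the boundary conditions,
with `ch 0 ≠ 0`, `L (ch 0) = λ • ch 0` a.e. and `L (ch j) = λ • ch j + ch (j-1)` a.e. -/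
def IsRootFunction (b₁ b₂ : ℝ) (Q12 Q21 : ℝ → ℂ) (a : Fin 2 → Fin 4 → ℂ)
    (y : ℝ → ℂ × ℂ) : Prop :=
  ∃ (lam : ℂ) (m : ℕ) (ch : ℕ → ℝ → ℂ × ℂ),
    (∀ j ≤ m, SatisfiesBC a (ch j)) ∧
    (∃ x ∈ I01, ch 0 x ≠ 0) ∧
    SolvesDirac b₁ b₂ Q12 Q21 (ch 0) (fun x => lam • ch 0 x) ∧
    (∀ j, 1 ≤ j → j ≤ m →
      SolvesDirac b₁ b₂ Q12 Q21 (ch j) (fun x => lam • ch j x + ch (j - 1) x)) ∧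
    ∃ j ≤ m, y = ch j

/-- Completeness of the system of root functions in `L²([0,1]; ℂ²)`: the closed linear
span of (the `L²`-classes of) all root functions is the whole space. -/
def RootSystemComplete (b₁ b₂ : ℝ) (Q12 Q21 : ℝ → ℂ) (a : Fin 2 → Fin 4 → ℂ) : Prop :=
  (Submodule.span ℂ {g : MeasureTheory.Lp (ℂ × ℂ) 2 mu01 |
    ∃ y : ℝ → ℂ × ℂ, IsRootFunction b₁ b₂ Q12 Q21 a y ∧
      (g : ℝ → ℂ × ℂ) =ᵐ[mu01] y}).topologicalClosure = ⊤

/-!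
Since `b_j' = q_± a_j` and `a_k = σ_k + ∑ b_j σ_{k-j}`, differentiating the latter turns the
recurrence `a_{k+1} = q_∓ b_k - a_k'` into one for `σ_{k+1}`. Substituting the inductive
hypothesis for the `σ_{k-j}'`, two double sums remain; they are the two bracketings of the
triple convolution `b * σ * σ`, so they cancel by associativity.
-/

section ConvPos

variable {R : Type*}

/-- The coefficient of `X^m` in `(∑_{j ≥ 1} f j X^j) * (∑_{j ≥ 1} g j X^j)`: the values
`f 0` and `g 0` never enter. -/
def convPos [Semiring R] (f g : ℕ → R) (m : ℕ) : R :=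
  ∑ j ∈ Finset.Icc 1 (m - 1), f j * g (m - j)

theorem convPos_assoc [Semiring R] (f g h : ℕ → R) (m : ℕ) :
    convPos (convPos f g) h m = convPos f (convPos g h) m := by
  simp only [convPos, Finset.sum_mul, Finset.mul_sum, Finset.sum_sigma']
  refine Finset.sum_nbij' (fun p => ⟨p.2, p.1 - p.2⟩) (fun p => ⟨p.1 + p.2, p.1⟩)
    ?_ ?_ ?_ ?_ ?_ <;> rintro ⟨j, i⟩ hp <;>
    simp only [Finset.mem_sigma, Finset.mem_Icc, Sigma.mk.inj_iff, heq_eq_eq,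
      and_true, true_and] at hp ⊢
  any_goals omega
  rw [show m - i - (j - i) = m - j by omega, mul_assoc]

theorem convPos_succ [Semiring R] (f g : ℕ → R) {m : ℕ} (hm : 1 ≤ m) :
    convPos f g (m + 1) = convPos f (fun i => g (i + 1)) m + f m * g 1 := by
  obtain ⟨m, rfl⟩ := Nat.exists_eq_add_of_le' hm
  rw [convPos, Nat.add_sub_cancel, Finset.sum_Icc_succ_top hm, Nat.add_sub_cancel_left, convPos,
    Nat.add_sub_cancel]
  congr 1
  refine Finset.sum_congr rfl fun j hj => ?_
  rw [Finset.mem_Icc] at hj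
  rw [show m + 1 + 1 - j = m + 1 - j + 1 by omega]

theorem convPos_congr [Semiring R] {f f' g g' : ℕ → R} {m : ℕ}
    (hf : ∀ j ∈ Finset.Icc 1 (m - 1), f j = f' j) (hg : ∀ j ∈ Finset.Icc 1 (m - 1), g j = g' j) :
    convPos f g m = convPos f' g' m :=
  Finset.sum_congr rfl fun j hj => by
    have hj' := Finset.mem_Icc.1 hj
    rw [hf j hj, hg (m - j) (Finset.mem_Icc.2 (by omega))]

theorem convPos_add_left [Semiring R] (f f' g : ℕ → R) (m : ℕ) :
    convPos (fun j => f j + f' j) g m = convPos f g m + convPos f' g m := by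
  simp only [convPos, add_mul, Finset.sum_add_distrib]

theorem convPos_add_right [Semiring R] (f g g' : ℕ → R) (m : ℕ) :
    convPos f (fun j => g j + g' j) m = convPos f g m + convPos f g' m := by
  simp only [convPos, mul_add, Finset.sum_add_distrib]

theorem convPos_neg_right [Ring R] (f g : ℕ → R) (m : ℕ) :
    convPos f (fun j => -g j) m = -convPos f g m := by
  simp only [convPos, mul_neg, Finset.sum_neg_distrib]

theorem convPos_mul_left [Semiring R] (c : R) (f g : ℕ → R) (m : ℕ) :
    convPos (fun j => c * f j) g m = c * convPos f g m := by
  simp only [convPos, Finset.mul_sum, mul_assoc]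

theorem convPos_mul_right [CommSemiring R] (c : R) (f g : ℕ → R) (m : ℕ) :
    convPos f (fun j => c * g j) m = c * convPos f g m := by
  simp only [convPos, Finset.mul_sum, mul_left_comm]

end ConvPos

theorem hasDerivWithinAt_integral_Icc {E : Type*} [NormedAddCommGroup E] [NormedSpace ℝ E]
    [CompleteSpace E] {f : ℝ → E} {a b c x : ℝ} (hf : ContinuousOn f (Icc a b))
    (hc : c ∈ Icc a b) (hx : x ∈ Icc a b) :
    HasDerivWithinAt (fun u => ∫ t in c..u, f t) (f x) (Icc a b) x := by
  have : Fact (x ∈ Icc a b) := ⟨hx⟩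
  exact intervalIntegral.integral_hasDerivWithinAt_right
    ((hf.mono (uIcc_subset_Icc hc hx)).intervalIntegrable)
    (hf.stronglyMeasurableAtFilter_nhdsWithin measurableSet_Icc x) (hf x hx)

section ConvPosCalculus

variable {𝕜 𝔸 : Type*} [NontriviallyNormedField 𝕜] [NormedRing 𝔸] [NormedAlgebra 𝕜 𝔸]
  {f g : ℕ → 𝕜 → 𝔸} {s : Set 𝕜} {m : ℕ}

theorem HasDerivWithinAt.convPos {f' g' : ℕ → 𝔸} {x : 𝕜}
    (hf : ∀ j ∈ Finset.Icc 1 (m - 1), HasDerivWithinAt (f j) (f' j) s x)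
    (hg : ∀ j ∈ Finset.Icc 1 (m - 1), HasDerivWithinAt (g j) (g' j) s x) :
    HasDerivWithinAt (fun y => convPos (f · y) (g · y) m)
      (convPos f' (g · x) m + convPos (f · x) g' m) s x := by
  rw [_root_.convPos, _root_.convPos, ← Finset.sum_add_distrib]
  refine HasDerivWithinAt.fun_sum fun j hj => (hf j hj).fun_mul (hg (m - j) ?_)
  rw [Finset.mem_Icc] at hj ⊢
  omega

theorem ContDiffOn.convPos {N : WithTop ℕ∞}
    (hf : ∀ j ∈ Finset.Icc 1 (m - 1), ContDiffOn 𝕜 N (f j) s)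
    (hg : ∀ j ∈ Finset.Icc 1 (m - 1), ContDiffOn 𝕜 N (g j) s) :
    ContDiffOn 𝕜 N (fun y => convPos (f · y) (g · y) m) s := by
  refine ContDiffOn.sum fun j hj => (hf j hj).mul (hg (m - j) ?_)
  rw [Finset.mem_Icc] at hj ⊢
  omega

end ConvPosCalculus

theorem uniqueDiffOn_I01 : UniqueDiffOn ℝ I01 := uniqueDiffOn_Icc zero_lt_one

/-- With `(q₁, q₂) = (q_±, q_∓)`, the sequences `a`, `b`, `σ` are `a^±`, `b^±`, `σ^±`. -/
structure SigmaRecurrence (n : ℕ) (q₁ q₂ : ℝ → ℂ) (a b σ : ℕ → ℝ → ℂ) : Prop where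
  a_zero : ∀ x, a 0 x = 0
  b_zero : ∀ x, b 0 x = 1
  a_eq : ∀ k, 1 ≤ k → k ≤ n → ∀ x ∈ I01,
    a k x = q₂ x * b (k - 1) x - derivWithin (a (k - 1)) I01 x
  b_eq : ∀ k, 1 ≤ k → k ≤ n → ∀ x ∈ I01, b k x = ∫ t in (0:ℝ)..x, q₁ t * a k t
  σ_eq : ∀ k, 1 ≤ k → k ≤ n → ∀ x ∈ I01, σ k x = a k x - convPos (b · x) (σ · x) k

namespace SigmaRecurrence

variable {n : ℕ} {q₁ q₂ : ℝ → ℂ} {a b σ : ℕ → ℝ → ℂ}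

theorem a_eq_add_convPos (h : SigmaRecurrence n q₁ q₂ a b σ) {k : ℕ} (hk : 1 ≤ k) (hkn : k ≤ n)
    {x : ℝ} (hx : x ∈ I01) : a k x = σ k x + convPos (b · x) (σ · x) k := by
  linear_combination -(h.σ_eq k hk hkn x hx)

theorem hasDerivWithinAt_b (h : SigmaRecurrence n q₁ q₂ a b σ) (hq₁ : ContinuousOn q₁ I01)
    {k : ℕ} (hkn : k ≤ n) (ha : ContinuousOn (a k) I01) {x : ℝ} (hx : x ∈ I01) :
    HasDerivWithinAt (b k) (q₁ x * a k x) I01 x := by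
  rcases Nat.eq_zero_or_pos k with rfl | hk
  · rw [show b 0 = fun _ => 1 from funext h.b_zero, h.a_zero, mul_zero]
    exact hasDerivWithinAt_const x I01 1
  · exact (hasDerivWithinAt_integral_Icc (hq₁.mul ha) (left_mem_Icc.2 zero_le_one) hx).congr
      (h.b_eq k hk hkn) (h.b_eq k hk hkn x hx)

theorem contDiffOn_a_b (h : SigmaRecurrence n q₁ q₂ a b σ)
    (hq₁ : ContDiffOn ℝ (n - 1 : ℕ) q₁ I01) (hq₂ : ContDiffOn ℝ (n - 1 : ℕ) q₂ I01) :
    ∀ k ≤ n, ContDiffOn ℝ (n - k : ℕ) (a k) I01 ∧ ContDiffOn ℝ (n - k + 1 : ℕ) (b k) I01 := by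
  intro k
  induction k with
  | zero =>
    intro _
    rw [show a 0 = fun _ => 0 from funext h.a_zero, show b 0 = fun _ => 1 from funext h.b_zero]
    exact ⟨contDiffOn_const, contDiffOn_const⟩
  | succ k ih =>
    intro hkn
    obtain ⟨ha, hb⟩ := ih (by omega)
    have ha' : ContDiffOn ℝ (n - (k + 1) : ℕ) (a (k + 1)) I01 :=
      ((hq₂.of_le (by norm_cast; omega)).mul (hb.of_le (by norm_cast; omega))).sub
        (ha.derivWithin uniqueDiffOn_I01 (by norm_cast; omega)) |>.congr
        (h.a_eq (k + 1) (by omega) hkn)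
    have hb' : ∀ x ∈ I01, HasDerivWithinAt (b (k + 1)) (q₁ x * a (k + 1) x) I01 x :=
      fun x hx => h.hasDerivWithinAt_b hq₁.continuousOn hkn ha'.continuousOn hx
    refine ⟨ha', ?_⟩
    rw [Nat.cast_add, Nat.cast_one, contDiffOn_succ_iff_derivWithin uniqueDiffOn_I01]
    refine ⟨fun x hx => (hb' x hx).differentiableWithinAt, by simp, ?_⟩
    exact ((hq₁.of_le (by norm_cast; omega)).mul ha').congr
      fun x hx => (hb' x hx).derivWithin (uniqueDiffOn_I01 x hx)

theorem contDiffOn_σ (h : SigmaRecurrence n q₁ q₂ a b σ)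
    (hq₁ : ContDiffOn ℝ (n - 1 : ℕ) q₁ I01) (hq₂ : ContDiffOn ℝ (n - 1 : ℕ) q₂ I01) :
    ∀ k, 1 ≤ k → k ≤ n → ContDiffOn ℝ (n - k : ℕ) (σ k) I01 := by
  intro k
  induction k using Nat.strong_induction_on with
  | _ k ih =>
    intro hk hkn
    refine ((h.contDiffOn_a_b hq₁ hq₂ k hkn).1.sub (ContDiffOn.convPos (fun j hj => ?_)
      (fun j hj => ?_))).congr (h.σ_eq k hk hkn) <;> rw [Finset.mem_Icc] at hj
    · exact (h.contDiffOn_a_b hq₁ hq₂ j (by omega)).2.of_le (by norm_cast; omega)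
    · exact (ih j (by omega) hj.1 (by omega)).of_le (by norm_cast; omega)

theorem σ_one (h : SigmaRecurrence n q₁ q₂ a b σ) (hn : 1 ≤ n) {x : ℝ} (hx : x ∈ I01) :
    σ 1 x = q₂ x := by
  rw [h.σ_eq 1 le_rfl hn x hx, h.a_eq 1 le_rfl hn x hx,
    show a (1 - 1) = fun _ => 0 from funext h.a_zero]
  simp [convPos, h.b_zero]

theorem hasDerivWithinAt_a (h : SigmaRecurrence n q₁ q₂ a b σ)
    (hq₁ : ContDiffOn ℝ (n - 1 : ℕ) q₁ I01) (hq₂ : ContDiffOn ℝ (n - 1 : ℕ) q₂ I01)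
    {k : ℕ} (hk : 1 ≤ k) (hkn : k < n) {x : ℝ} (hx : x ∈ I01) :
    HasDerivWithinAt (a k) (derivWithin (σ k) I01 x +
      (convPos (fun j => q₁ x * a j x) (σ · x) k +
        convPos (b · x) (fun j => derivWithin (σ j) I01 x) k)) I01 x := by
  have hσ : ∀ j, 1 ≤ j → j ≤ k → HasDerivWithinAt (σ j) (derivWithin (σ j) I01 x) I01 x :=
    fun j hj hjk => ((h.contDiffOn_σ hq₁ hq₂ j hj (by omega)).differentiableOn
      (by norm_cast; omega) x hx).hasDerivWithinAt
  refine ((hσ k hk le_rfl).add (HasDerivWithinAt.convPos (fun j hj => ?_) (fun j hj => ?_))).congr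
    (fun y hy => h.a_eq_add_convPos hk hkn.le hy) (h.a_eq_add_convPos hk hkn.le hx) <;>
    rw [Finset.mem_Icc] at hj
  · exact h.hasDerivWithinAt_b hq₁.continuousOn (by omega)
      (h.contDiffOn_a_b hq₁ hq₂ j (by omega)).1.continuousOn hx
  · exact hσ j hj.1 (by omega)

theorem σ_succ (h : SigmaRecurrence n q₁ q₂ a b σ)
    (hq₁ : ContDiffOn ℝ (n - 1 : ℕ) q₁ I01) (hq₂ : ContDiffOn ℝ (n - 1 : ℕ) q₂ I01) :
    ∀ k, 1 ≤ k → k + 1 ≤ n → ∀ x ∈ I01,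
      σ (k + 1) x = -derivWithin (σ k) I01 x - q₁ x * convPos (σ · x) (σ · x) k := by
  intro k
  induction k using Nat.strong_induction_on with
  | _ k ih =>
    intro hk hkn x hx
    have ha_succ := h.a_eq (k + 1) (by omega) hkn x hx
    rw [Nat.add_sub_cancel] at ha_succ
    have hda := (h.hasDerivWithinAt_a hq₁ hq₂ hk (by omega) hx).derivWithin (uniqueDiffOn_I01 x hx)
    have hqa : convPos (fun j => q₁ x * a j x) (σ · x) k =
        q₁ x * (convPos (σ · x) (σ · x) k + convPos (convPos (b · x) (σ · x)) (σ · x) k) := by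
      rw [convPos_mul_left, ← convPos_add_left]
      exact congrArg _ (convPos_congr (fun j hj => by
        rw [Finset.mem_Icc] at hj; exact h.a_eq_add_convPos hj.1 (by omega) hx) fun _ _ => rfl)
    have hbdσ : convPos (b · x) (fun j => derivWithin (σ j) I01 x) k =
        -(convPos (b · x) (fun i => σ (i + 1) x) k +
          q₁ x * convPos (b · x) (convPos (σ · x) (σ · x)) k) := by
      rw [← convPos_mul_right, ← convPos_add_right, ← convPos_neg_right]
      refine convPos_congr (fun _ _ => rfl) fun j hj => ?_
      rw [Finset.mem_Icc] at hj
      linear_combination ih j (by omega) hj.1 (by omega) x hx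
    rw [h.σ_eq (k + 1) (by omega) hkn x hx, ha_succ, hda, convPos_succ _ _ hk,
      h.σ_one (by omega) hx, hqa, hbdσ, convPos_assoc]
    ring

end SigmaRecurrence

theorem statement_9_general
    (n : ℕ) (hn : 1 ≤ n)
    (qp qm : ℝ → ℂ) (hqp : MemW1 n qp) (hqm : MemW1 n qm)
    (ap am bp bm : ℕ → ℝ → ℂ)
    (hap0 : ∀ x : ℝ, ap 0 x = 0) (ham0 : ∀ x : ℝ, am 0 x = 0)
    (hbp0 : ∀ x : ℝ, bp 0 x = 1) (hbm0 : ∀ x : ℝ, bm 0 x = 1)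
    (hapk : ∀ k, 1 ≤ k → k ≤ n → ∀ x ∈ I01,
      ap k x = qm x * bp (k - 1) x - derivWithin (ap (k - 1)) I01 x)
    (hamk : ∀ k, 1 ≤ k → k ≤ n → ∀ x ∈ I01,
      am k x = qp x * bm (k - 1) x - derivWithin (am (k - 1)) I01 x)
    (hbpk : ∀ k, 1 ≤ k → k ≤ n → ∀ x ∈ I01,
      bp k x = ∫ t in (0:ℝ)..x, qp t * ap k t)
    (hbmk : ∀ k, 1 ≤ k → k ≤ n → ∀ x ∈ I01,
      bm k x = ∫ t in (0:ℝ)..x, qm t * am k t)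
    (σp σm : ℕ → ℝ → ℂ)
    (hσp : ∀ k, 1 ≤ k → k ≤ n → ∀ x ∈ I01,
      σp k x = ap k x - ∑ j ∈ Finset.Icc 1 (k - 1), bp j x * σp (k - j) x)
    (hσm : ∀ k, 1 ≤ k → k ≤ n → ∀ x ∈ I01,
      σm k x = am k x - ∑ j ∈ Finset.Icc 1 (k - 1), bm j x * σm (k - j) x) :
    (∀ x ∈ I01, σp 1 x = qm x ∧ σm 1 x = qp x) ∧
    (∀ k, 1 ≤ k → k + 1 ≤ n → ∀ x ∈ I01,
      σp (k + 1) x = -(derivWithin (σp k) I01 x)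
        - qp x * ∑ j ∈ Finset.Icc 1 (k - 1), σp j x * σp (k - j) x) ∧
    (∀ k, 1 ≤ k → k + 1 ≤ n → ∀ x ∈ I01,
      σm (k + 1) x = -(derivWithin (σm k) I01 x)
        - qm x * ∑ j ∈ Finset.Icc 1 (k - 1), σm j x * σm (k - j) x) := by
  have hp : SigmaRecurrence n qp qm ap bp σp := ⟨hap0, hbp0, hapk, hbpk, hσp⟩
  have hm : SigmaRecurrence n qm qp am bm σm := ⟨ham0, hbm0, hamk, hbmk, hσm⟩
  exact ⟨fun x hx => ⟨hp.σ_one hn hx, hm.σ_one hn hx⟩, hp.σ_succ hqp.1 hqm.1, hm.σ_succ hqm.1 hqp.1⟩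

/-- Proposition: the explicit recurrence for `σ_k^±`. -/
theorem statement_9
    (b₁ b₂ : ℝ) (hb₁ : b₁ < 0) (hb₂ : 0 < b₂)
    (n : ℕ) (hn : 1 ≤ n)
    (qp qm : ℝ → ℂ) (hqp : MemW1 n qp) (hqm : MemW1 n qm)
    (ap am bp bm : ℕ → ℝ → ℂ)
    (hap0 : ∀ x : ℝ, ap 0 x = 0) (ham0 : ∀ x : ℝ, am 0 x = 0)
    (hbp0 : ∀ x : ℝ, bp 0 x = 1) (hbm0 : ∀ x : ℝ, bm 0 x = 1)
    (hapk : ∀ k, 1 ≤ k → k ≤ n → ∀ x ∈ I01,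
      ap k x = qm x * bp (k - 1) x - derivWithin (ap (k - 1)) I01 x)
    (hamk : ∀ k, 1 ≤ k → k ≤ n → ∀ x ∈ I01,
      am k x = qp x * bm (k - 1) x - derivWithin (am (k - 1)) I01 x)
    (hbpk : ∀ k, 1 ≤ k → k ≤ n → ∀ x ∈ I01,
      bp k x = ∫ t in (0:ℝ)..x, qp t * ap k t)
    (hbmk : ∀ k, 1 ≤ k → k ≤ n → ∀ x ∈ I01,
      bm k x = ∫ t in (0:ℝ)..x, qm t * am k t)
    (σp σm : ℕ → ℝ → ℂ)
    (hσp : ∀ k, 1 ≤ k → k ≤ n → ∀ x ∈ I01,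
      σp k x = ap k x - ∑ j ∈ Finset.Icc 1 (k - 1), bp j x * σp (k - j) x)
    (hσm : ∀ k, 1 ≤ k → k ≤ n → ∀ x ∈ I01,
      σm k x = am k x - ∑ j ∈ Finset.Icc 1 (k - 1), bm j x * σm (k - j) x) :
    (∀ x ∈ I01, σp 1 x = qm x ∧ σm 1 x = qp x) ∧
    (∀ k, 1 ≤ k → k + 1 ≤ n → ∀ x ∈ I01,
      σp (k + 1) x = -(derivWithin (σp k) I01 x)
        - qp x * ∑ j ∈ Finset.Icc 1 (k - 1), σp j x * σp (k - j) x) ∧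
    (∀ k, 1 ≤ k → k + 1 ≤ n → ∀ x ∈ I01,
      σm (k + 1) x = -(derivWithin (σm k) I01 x)
        - qm x * ∑ j ∈ Finset.Icc 1 (k - 1), σm j x * σm (k - j) x) :=
  statement_9_general n hn qp qm hqp hqm ap am bp bm hap0 ham0 hbp0 hbm0 hapk hamk hbpk hbmk σp σm
    hσp hσm
end
end

section
/- Let Q_{12}, Q_{21} ∈ W^n_1[0,1], let a ∈ [0,1], m ∈ {0,1,…,n−1}, and set m_0 := min{2m+2, n}. If q_−^{(j)}(a) = 0 for all 0 ≤ j < m, then σ_j^+(a) = (−1)^{j−1} q_−^{(j−1)}(a) for all 1 ≤ j ≤ m_0. Likewise, if q_+^{(j)}(a) = 0 for all 0 ≤ j < m, then σ_j^-(a) = (−1)^{j−1} q_+^{(j−1)}(a) for all 1 ≤ j ≤ m_0. -/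
open MeasureTheory Set Filter

noncomputable section

/-!
Differentiating the recursion gives `σ_{k+1}^{(p)} = -σ_k^{(p+1)} - (q_± S_k)^{(p)}` with
`S_k = ∑ σ_j σ_{k-j}`. Inductively `σ_j^{(i)}(a) = (-1)^{j-1} q^{(j-1+i)}(a)`, so `σ_j` vanishes
at `a` to order `m + 1 - j`, and by the Leibniz rule `σ_j σ_{k-j}` vanishes there to order
`2m + 2 - k`. Hence the quadratic term contributes nothing as long as `k + 1 + p ≤ 2m + 2`,
and only `-σ_k^{(p+1)}` survives.
-/

section SigmaRecursion

variable {𝕜 𝔸 : Type*} [NontriviallyNormedField 𝕜] [NormedRing 𝔸] [NormedAlgebra 𝕜 𝔸]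
  {s : Set 𝕜} {x : 𝕜}

theorem iteratedDerivWithin_mul_eq_zero {f g : 𝕜 → 𝔸} {i a b : ℕ} (hx : x ∈ s)
    (hs : UniqueDiffOn 𝕜 s) (hf : ContDiffWithinAt 𝕜 i f s x) (hg : ContDiffWithinAt 𝕜 i g s x)
    (hfa : ∀ j < a, iteratedDerivWithin j f s x = 0)
    (hgb : ∀ j < b, iteratedDerivWithin j g s x = 0) (hi : i < a + b) :
    iteratedDerivWithin i (f * g) s x = 0 := by
  rw [iteratedDerivWithin_mul hx hs hf hg]
  refine Finset.sum_eq_zero fun j hj => ?_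
  rw [Finset.mem_range] at hj
  rcases lt_or_ge j a with hja | hja
  · simp [hfa j hja]
  · simp [hgb (i - j) (by omega)]

def SatisfiesSigmaRecursion (s : Set 𝕜) (q r : 𝕜 → 𝔸) (n : ℕ) (σ : ℕ → 𝕜 → 𝔸) : Prop :=
  EqOn (σ 1) q s ∧ ∀ k, 1 ≤ k → k + 1 ≤ n → ∀ x ∈ s,
    σ (k + 1) x = -derivWithin (σ k) s x - r x * ∑ j ∈ Finset.Icc 1 (k - 1), σ j x * σ (k - j) x

namespace SatisfiesSigmaRecursion

variable {q r : 𝕜 → 𝔸} {n : ℕ} {σ : ℕ → 𝕜 → 𝔸}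

theorem eqOn_succ (h : SatisfiesSigmaRecursion s q r n σ) {k : ℕ} (hk : 1 ≤ k)
    (hkn : k + 1 ≤ n) :
    EqOn (σ (k + 1))
      (-derivWithin (σ k) s - r * fun x => ∑ j ∈ Finset.Icc 1 (k - 1), σ j x * σ (k - j) x) s :=
  h.2 k hk hkn

theorem contDiffOn (h : SatisfiesSigmaRecursion s q r n σ) (hs : UniqueDiffOn 𝕜 s)
    (hq : ContDiffOn 𝕜 (n - 1 : ℕ) q s) (hr : ContDiffOn 𝕜 (n - 1 : ℕ) r s) {k : ℕ}
    (hk : 1 ≤ k) (hkn : k ≤ n) : ContDiffOn 𝕜 (n - k : ℕ) (σ k) s := by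
  induction k using Nat.strong_induction_on with
  | _ k ih =>
  obtain _ | _ | k := k
  · omega
  · exact hq.congr h.1
  refine ContDiffOn.congr ?_ (h.eqOn_succ (k := k + 1) (by omega) hkn)
  refine ((ih (k + 1) (by omega) (by omega) (by omega)).derivWithin hs
    (by norm_cast; omega)).neg.sub
    ((hr.of_le (by norm_cast; omega)).mul (ContDiffOn.sum fun j hj => ?_))
  rw [Finset.mem_Icc] at hj
  exact ((ih j (by omega) hj.1 (by omega)).of_le (by norm_cast; omega)).mul
    ((ih (k + 1 - j) (by omega) (by omega) (by omega)).of_le (by norm_cast; omega))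

theorem contDiffOn_of_add_le (h : SatisfiesSigmaRecursion s q r n σ) (hs : UniqueDiffOn 𝕜 s)
    (hq : ContDiffOn 𝕜 (n - 1 : ℕ) q s) (hr : ContDiffOn 𝕜 (n - 1 : ℕ) r s) {k i : ℕ}
    (hk : 1 ≤ k) (hki : k + i ≤ n) : ContDiffOn 𝕜 i (σ k) s :=
  (h.contDiffOn hs hq hr hk (by omega)).of_le (by norm_cast; omega)

theorem iteratedDerivWithin_eq (h : SatisfiesSigmaRecursion s q r n σ) (hs : UniqueDiffOn 𝕜 s)
    (hq : ContDiffOn 𝕜 (n - 1 : ℕ) q s) (hr : ContDiffOn 𝕜 (n - 1 : ℕ) r s) (hx : x ∈ s)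
    {m : ℕ} (hqm : ∀ j < m, iteratedDerivWithin j q s x = 0) {k p : ℕ}
    (hk : 1 ≤ k) (hkp : k + p ≤ min (2 * m + 2) n) :
    iteratedDerivWithin p (σ k) s x = (-1) ^ (k - 1) * iteratedDerivWithin (k - 1 + p) q s x := by
  induction k using Nat.strong_induction_on generalizing p with
  | _ k ih =>
  obtain _ | _ | k := k
  · omega
  · simp [iteratedDerivWithin_congr h.1 hx]
  -- `min m n`: the induction hypothesis only reaches derivatives with `j + i ≤ n`.
  have hσ : ∀ j, 1 ≤ j → j ≤ k → ∀ i < min m n + 1 - j,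
      iteratedDerivWithin i (σ j) s x = 0 := by
    intro j hj hjk i hi
    rw [ih j (by omega) hj (by omega), hqm _ (by omega), mul_zero]
  set S : 𝕜 → 𝔸 := fun x => ∑ j ∈ Finset.Icc 1 k, σ j x * σ (k + 1 - j) x
  have hSC : ContDiffOn 𝕜 p S s := ContDiffOn.sum fun j hj => by
    rw [Finset.mem_Icc] at hj
    exact (h.contDiffOn_of_add_le hs hq hr hj.1 (by omega)).mul
      (h.contDiffOn_of_add_le hs hq hr (by omega) (by omega))
  have hS : ∀ i < p + 1, iteratedDerivWithin i S s x = 0 := by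
    intro i hi
    rw [iteratedDerivWithin_fun_sum hx hs fun j hj => ?_]
    · refine Finset.sum_eq_zero fun j hj => ?_
      rw [Finset.mem_Icc] at hj
      exact iteratedDerivWithin_mul_eq_zero hx hs
        ((h.contDiffOn_of_add_le hs hq hr hj.1 (by omega)).contDiffWithinAt hx)
        ((h.contDiffOn_of_add_le hs hq hr (by omega) (by omega)).contDiffWithinAt hx)
        (hσ j hj.1 hj.2) (hσ (k + 1 - j) (by omega) (by omega)) (by omega)
    · rw [Finset.mem_Icc] at hj
      exact ((h.contDiffOn_of_add_le hs hq hr hj.1 (by omega)).mul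
        (h.contDiffOn_of_add_le hs hq hr (by omega) (by omega))).contDiffWithinAt hx
  have hrS : iteratedDerivWithin p (r * S) s x = 0 :=
    iteratedDerivWithin_mul_eq_zero (a := 0) hx hs
      ((hr.of_le (by norm_cast; omega)).contDiffWithinAt hx) (hSC.contDiffWithinAt hx)
      (by simp) hS (by omega)
  have hdσ : ContDiffOn 𝕜 p (-derivWithin (σ (k + 1)) s) s :=
    ((h.contDiffOn_of_add_le hs hq hr (i := p + 1) (by omega) (by omega)).derivWithin hs
      (by norm_cast)).neg
  calc iteratedDerivWithin p (σ (k + 1 + 1)) s x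
      = iteratedDerivWithin p (-derivWithin (σ (k + 1)) s - r * S) s x :=
        iteratedDerivWithin_congr (h.eqOn_succ (by omega) (by omega)) hx
    _ = -iteratedDerivWithin (p + 1) (σ (k + 1)) s x := by
        have hrSC : ContDiffOn 𝕜 p (r * S) s := (hr.of_le (by norm_cast; omega)).mul hSC
        rw [iteratedDerivWithin_sub hx hs (hdσ.contDiffWithinAt hx) (hrSC.contDiffWithinAt hx),
          iteratedDerivWithin_neg, hrS, sub_zero, iteratedDerivWithin_succ']
    _ = (-1) ^ (k + 1) * iteratedDerivWithin (k + 1 + p) q s x := by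
        rw [ih (k + 1) (by omega) (by omega) (by omega),
          show k + 1 - 1 + (p + 1) = k + 1 + p by omega, Nat.add_sub_cancel, pow_succ,
          mul_neg_one, neg_mul]

theorem apply_eq (h : SatisfiesSigmaRecursion s q r n σ) (hs : UniqueDiffOn 𝕜 s)
    (hq : ContDiffOn 𝕜 (n - 1 : ℕ) q s) (hr : ContDiffOn 𝕜 (n - 1 : ℕ) r s) (hx : x ∈ s)
    {m : ℕ} (hqm : ∀ j < m, iteratedDerivWithin j q s x = 0) {k : ℕ} (hk : 1 ≤ k)
    (hkm : k ≤ min (2 * m + 2) n) :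
    σ k x = (-1) ^ (k - 1) * iteratedDerivWithin (k - 1) q s x := by
  simpa using h.iteratedDerivWithin_eq hs hq hr hx hqm hk (p := 0) (by simpa using hkm)

end SatisfiesSigmaRecursion

end SigmaRecursion

theorem statement_11_general
    (b₁ b₂ : ℝ)
    (Q12 Q21 : ℝ → ℂ)
    (n : ℕ)
    (hQ12 : MemW1 n Q12) (hQ21 : MemW1 n Q21)
    (qp qm : ℝ → ℂ)
    (hqp : qp = fun x => -Complex.I * (b₁ : ℂ) * Q12 x)
    (hqm : qm = fun x => -Complex.I * (b₂ : ℂ) * Q21 x)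
    (σp σm : ℕ → ℝ → ℂ)
    (hσp1 : ∀ x ∈ I01, σp 1 x = qm x)
    (hσm1 : ∀ x ∈ I01, σm 1 x = qp x)
    (hσpRec : ∀ k, 1 ≤ k → k + 1 ≤ n → ∀ x ∈ I01,
      σp (k + 1) x = -(derivWithin (σp k) I01 x)
        - qp x * ∑ j ∈ Finset.Icc 1 (k - 1), σp j x * σp (k - j) x)
    (hσmRec : ∀ k, 1 ≤ k → k + 1 ≤ n → ∀ x ∈ I01,
      σm (k + 1) x = -(derivWithin (σm k) I01 x)
        - qm x * ∑ j ∈ Finset.Icc 1 (k - 1), σm j x * σm (k - j) x)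
    (A : ℝ) (hA : A ∈ I01) (m : ℕ)
    (m₀ : ℕ) (hm₀ : m₀ = min (2 * m + 2) n) :
    ((∀ j < m, iteratedDerivWithin j qm I01 A = 0) →
      ∀ j, 1 ≤ j → j ≤ m₀ →
        σp j A = (-1) ^ (j - 1) * iteratedDerivWithin (j - 1) qm I01 A) ∧
    ((∀ j < m, iteratedDerivWithin j qp I01 A = 0) →
      ∀ j, 1 ≤ j → j ≤ m₀ →
        σm j A = (-1) ^ (j - 1) * iteratedDerivWithin (j - 1) qp I01 A) := by
  subst hm₀
  have hs : UniqueDiffOn ℝ I01 := uniqueDiffOn_Icc zero_lt_one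
  have hqpC : ContDiffOn ℝ (n - 1 : ℕ) qp I01 := hqp ▸ contDiffOn_const.mul hQ12.1
  have hqmC : ContDiffOn ℝ (n - 1 : ℕ) qm I01 := hqm ▸ contDiffOn_const.mul hQ21.1
  exact ⟨fun hvan _ hj hjm =>
      SatisfiesSigmaRecursion.apply_eq ⟨hσp1, hσpRec⟩ hs hqmC hqpC hA hvan hj hjm,
    fun hvan _ hj hjm =>
      SatisfiesSigmaRecursion.apply_eq ⟨hσm1, hσmRec⟩ hs hqpC hqmC hA hvan hj hjm⟩

/-- Lemma: `σ_j^±(a)` under vanishing of low-order derivatives. -/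
theorem statement_11
    (b₁ b₂ : ℝ) (hb₁ : b₁ < 0) (hb₂ : 0 < b₂)
    (Q12 Q21 : ℝ → ℂ)
    (n : ℕ) (hn : 1 ≤ n)
    (hQ12 : MemW1 n Q12) (hQ21 : MemW1 n Q21)
    (qp qm : ℝ → ℂ)
    (hqp : qp = fun x => -Complex.I * (b₁ : ℂ) * Q12 x)
    (hqm : qm = fun x => -Complex.I * (b₂ : ℂ) * Q21 x)
    (σp σm : ℕ → ℝ → ℂ)
    (hσp1 : ∀ x ∈ I01, σp 1 x = qm x)
    (hσm1 : ∀ x ∈ I01, σm 1 x = qp x)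
    (hσpRec : ∀ k, 1 ≤ k → k + 1 ≤ n → ∀ x ∈ I01,
      σp (k + 1) x = -(derivWithin (σp k) I01 x)
        - qp x * ∑ j ∈ Finset.Icc 1 (k - 1), σp j x * σp (k - j) x)
    (hσmRec : ∀ k, 1 ≤ k → k + 1 ≤ n → ∀ x ∈ I01,
      σm (k + 1) x = -(derivWithin (σm k) I01 x)
        - qm x * ∑ j ∈ Finset.Icc 1 (k - 1), σm j x * σm (k - j) x)
    (A : ℝ) (hA : A ∈ I01) (m : ℕ) (hm : m < n)
    (m₀ : ℕ) (hm₀ : m₀ = min (2 * m + 2) n) :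
    ((∀ j < m, iteratedDerivWithin j qm I01 A = 0) →
      ∀ j, 1 ≤ j → j ≤ m₀ →
        σp j A = (-1) ^ (j - 1) * iteratedDerivWithin (j - 1) qm I01 A) ∧
    ((∀ j < m, iteratedDerivWithin j qp I01 A = 0) →
      ∀ j, 1 ≤ j → j ≤ m₀ →
        σm j A = (-1) ^ (j - 1) * iteratedDerivWithin (j - 1) qp I01 A) :=
  statement_11_general b₁ b₂ Q12 Q21 n hQ12 hQ21 qp qm hqp hqm σp σm hσp1 hσm1 hσpRec hσmRec A hA m
    m₀ hm₀
end
end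

section
/- Let Q_{12}, Q_{21} ∈ W^n_1[0,1], a ∈ [0,1], and m ∈ {0,1,…,n−1}. (i) If q_−^{(j)}(a) = 0 for all 0 ≤ j < m and q_−^{(m)}(a) ≠ 0, then σ_j^+(a) = 0 for 1 ≤ j ≤ m and σ_{m+1}^+(a) ≠ 0. (ii) If q_+^{(j)}(a) = 0 for all 0 ≤ j < m and q_+^{(m)}(a) ≠ 0, then σ_j^-(a) = 0 for 1 ≤ j ≤ m and σ_{m+1}^-(a) ≠ 0. -/
open MeasureTheory Set Filter

noncomputable section

/-!
Differentiating the recursion gives `σ_{k+1}^{(i)}(a) = -σ_k^{(i+1)}(a)` as soon as the quadratic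
term `∑ σ_j σ_{k-j}` vanishes to order `i` at `a`. By Leibniz' rule this holds when every `σ_j`,
`j < k`, does, so induction on `k` yields `σ_{k+1}^{(i)}(a) = (-1)^k q^{(i+k)}(a)` for `i + k ≤ m`.
At `i = 0` this reads `σ_{k+1}(a) = (-1)^k q^{(k)}(a)` for `k ≤ m`.
-/

variable {𝕜 : Type*} [NontriviallyNormedField 𝕜] {𝔸 : Type*} [NormedRing 𝔸] [NormedAlgebra 𝕜 𝔸]
  {s : Set 𝕜} {A : 𝕜}

lemma iteratedDerivWithin_mul_eq_zero_s12 (hA : A ∈ s) (hs : UniqueDiffOn 𝕜 s) {f g : 𝕜 → 𝔸}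
    {r : ℕ} (hf : ContDiffWithinAt 𝕜 r f s A) (hg : ContDiffWithinAt 𝕜 r g s A)
    (hg0 : ∀ l ≤ r, iteratedDerivWithin l g s A = 0) :
    iteratedDerivWithin r (f * g) s A = 0 := by
  rw [iteratedDerivWithin_mul hA hs hf hg]
  exact Finset.sum_eq_zero fun i _ => by rw [hg0 _ (Nat.sub_le r i), mul_zero]

def selfConv (σ : ℕ → 𝕜 → 𝔸) (k : ℕ) : 𝕜 → 𝔸 :=
  fun x => ∑ j ∈ Finset.Icc 1 (k - 1), σ j x * σ (k - j) x

lemma contDiffOn_selfConv {σ : ℕ → 𝕜 → 𝔸} {k : ℕ} {r : WithTop ℕ∞}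
    (hσ : ∀ j, 1 ≤ j → j < k → ContDiffOn 𝕜 r (σ j) s) : ContDiffOn 𝕜 r (selfConv σ k) s :=
  ContDiffOn.sum fun j hj => by
    rw [Finset.mem_Icc] at hj
    exact (hσ j hj.1 (by omega)).mul (hσ (k - j) (by omega) (by omega))

lemma iteratedDerivWithin_selfConv_eq_zero (hA : A ∈ s) (hs : UniqueDiffOn 𝕜 s)
    {σ : ℕ → 𝕜 → 𝔸} {k r : ℕ} (hσ : ∀ j, 1 ≤ j → j < k → ContDiffOn 𝕜 r (σ j) s)
    (hσ0 : ∀ j, 1 ≤ j → j < k → ∀ l ≤ r, iteratedDerivWithin l (σ j) s A = 0) :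
    iteratedDerivWithin r (selfConv σ k) s A = 0 := by
  have hmem : ∀ j ∈ Finset.Icc 1 (k - 1), 1 ≤ j ∧ j < k ∧ 1 ≤ k - j ∧ k - j < k := by
    intro j hj
    rw [Finset.mem_Icc] at hj
    omega
  have hterm : ∀ j ∈ Finset.Icc 1 (k - 1),
      ContDiffWithinAt 𝕜 r (fun x => σ j x * σ (k - j) x) s A := fun j hj => by
    obtain ⟨hj1, hjk, hkj1, hkjk⟩ := hmem j hj
    exact (hσ j hj1 hjk A hA).mul (hσ _ hkj1 hkjk A hA)
  unfold selfConv
  rw [iteratedDerivWithin_fun_sum hA hs hterm]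
  refine Finset.sum_eq_zero fun j hj => ?_
  obtain ⟨hj1, hjk, hkj1, hkjk⟩ := hmem j hj
  exact iteratedDerivWithin_mul_eq_zero_s12 hA hs (hσ j hj1 hjk A hA) (hσ _ hkj1 hkjk A hA)
    (hσ0 _ hkj1 hkjk)

/-- The paper's `σ^±` are the sequences with `(q, p) = (q_∓, q_±)`. -/
structure IsSigmaSeq (s : Set 𝕜) (n : ℕ) (q p : 𝕜 → 𝔸) (σ : ℕ → 𝕜 → 𝔸) : Prop where
  one : ∀ x ∈ s, σ 1 x = q x
  succ : ∀ k, 1 ≤ k → k + 1 ≤ n → ∀ x ∈ s,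
    σ (k + 1) x = -derivWithin (σ k) s x - p x * selfConv σ k x

namespace IsSigmaSeq

variable {n : ℕ} {q p : 𝕜 → 𝔸} {σ : ℕ → 𝕜 → 𝔸}

lemma eqOn_succ (hσ : IsSigmaSeq s n q p σ) {k : ℕ} (hk : 1 ≤ k) (hkn : k + 1 ≤ n) :
    s.EqOn (σ (k + 1)) (-derivWithin (σ k) s - p * selfConv σ k) :=
  hσ.succ k hk hkn

lemma contDiffOn (hσ : IsSigmaSeq s n q p σ) (hs : UniqueDiffOn 𝕜 s)
    (hq : ContDiffOn 𝕜 (n - 1 : ℕ) q s) (hp : ContDiffOn 𝕜 (n - 1 : ℕ) p s) :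
    ∀ k, 1 ≤ k → k ≤ n → ContDiffOn 𝕜 (n - k : ℕ) (σ k) s := by
  intro k
  induction k using Nat.strong_induction_on with
  | _ k ih =>
    intro hk hkn
    obtain rfl | ⟨k, hk1, rfl⟩ : k = 1 ∨ ∃ k', 1 ≤ k' ∧ k = k' + 1 :=
      by rcases k with _ | _ | k <;> simp_all
    · exact hq.congr hσ.one
    have hderiv : ContDiffOn 𝕜 (n - (k + 1) : ℕ) (derivWithin (σ k) s) s :=
      (ih k (by omega) hk1 (by omega)).derivWithin hs (by norm_cast; omega)
    have hconv : ContDiffOn 𝕜 (n - (k + 1) : ℕ) (selfConv σ k) s :=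
      contDiffOn_selfConv fun j hj hjk =>
        (ih j (by omega) hj (by omega)).of_le (by norm_cast; omega)
    exact (hderiv.neg.sub ((hp.of_le (by norm_cast; omega)).mul hconv)).congr
      (hσ.eqOn_succ hk1 hkn)

lemma iteratedDerivWithin_succ (hσ : IsSigmaSeq s n q p σ) (hs : UniqueDiffOn 𝕜 s)
    (hq : ContDiffOn 𝕜 (n - 1 : ℕ) q s) (hp : ContDiffOn 𝕜 (n - 1 : ℕ) p s) (hA : A ∈ s)
    {k i : ℕ} (hk : 1 ≤ k) (hkn : k + i < n)
    (hconv : ∀ l ≤ i, iteratedDerivWithin l (selfConv σ k) s A = 0) :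
    iteratedDerivWithin i (σ (k + 1)) s A = -iteratedDerivWithin (i + 1) (σ k) s A := by
  have hsmooth := hσ.contDiffOn hs hq hp
  have hderiv : ContDiffOn 𝕜 i (derivWithin (σ k) s) s :=
    (hsmooth k hk (by omega)).derivWithin hs (by norm_cast; omega)
  have hconvSmooth : ContDiffOn 𝕜 i (selfConv σ k) s :=
    contDiffOn_selfConv fun j hj hjk => (hsmooth j hj (by omega)).of_le (by norm_cast; omega)
  have hpSmooth : ContDiffOn 𝕜 i p s := hp.of_le (by norm_cast; omega)
  rw [iteratedDerivWithin_congr (hσ.eqOn_succ hk (by omega)) hA,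
    iteratedDerivWithin_sub (f := -derivWithin (σ k) s) (g := p * selfConv σ k) hA hs
      (hderiv.neg A hA) ((hpSmooth.mul hconvSmooth) A hA),
    iteratedDerivWithin_neg, ← iteratedDerivWithin_succ',
    iteratedDerivWithin_mul_eq_zero_s12 hA hs (hpSmooth A hA) (hconvSmooth A hA) hconv, sub_zero]

lemma iteratedDerivWithin_eq_neg_one_pow_mul (hσ : IsSigmaSeq s n q p σ)
    (hs : UniqueDiffOn 𝕜 s) (hq : ContDiffOn 𝕜 (n - 1 : ℕ) q s)
    (hp : ContDiffOn 𝕜 (n - 1 : ℕ) p s) (hA : A ∈ s) {m : ℕ} (hm : m < n)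
    (hvan : ∀ j < m, iteratedDerivWithin j q s A = 0) :
    ∀ k i, i + k ≤ m →
      iteratedDerivWithin i (σ (k + 1)) s A = (-1) ^ k * iteratedDerivWithin (i + k) q s A := by
  intro k
  induction k using Nat.strong_induction_on with
  | _ k ih =>
    intro i hik
    rcases k with _ | k
    · simpa using iteratedDerivWithin_congr hσ.one hA
    have hlower : ∀ j, 1 ≤ j → j < k + 1 → ∀ l ≤ i, iteratedDerivWithin l (σ j) s A = 0 := by
      rintro (_ | j) hj hjk l hl
      · omega
      rw [ih j (by omega) l (by omega), hvan _ (by omega), mul_zero]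
    have hconv : ∀ l ≤ i, iteratedDerivWithin l (selfConv σ (k + 1)) s A = 0 :=
      fun l hl => iteratedDerivWithin_selfConv_eq_zero hA hs
        (fun j hj _ => (hσ.contDiffOn hs hq hp j hj (by omega)).of_le (by norm_cast; omega))
        (fun j hj hjk l' hl' => hlower j hj hjk l' (by omega))
    rw [hσ.iteratedDerivWithin_succ hs hq hp hA (by omega) (by omega) hconv,
      ih k (by omega) (i + 1) (by omega), pow_succ, mul_neg_one, neg_mul, add_right_comm,
      ← add_assoc]

theorem eq_zero_and_ne_zero (hσ : IsSigmaSeq s n q p σ) (hs : UniqueDiffOn 𝕜 s)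
    (hq : ContDiffOn 𝕜 (n - 1 : ℕ) q s) (hp : ContDiffOn 𝕜 (n - 1 : ℕ) p s) (hA : A ∈ s)
    {m : ℕ} (hm : m < n) (hvan : ∀ j < m, iteratedDerivWithin j q s A = 0)
    (hq0 : iteratedDerivWithin m q s A ≠ 0) :
    (∀ j, 1 ≤ j → j ≤ m → σ j A = 0) ∧ σ (m + 1) A ≠ 0 := by
  have hval : ∀ k ≤ m, σ (k + 1) A = (-1) ^ k * iteratedDerivWithin k q s A := fun k hk => by
    simpa using hσ.iteratedDerivWithin_eq_neg_one_pow_mul hs hq hp hA hm hvan k 0 (by omega)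
  refine ⟨fun j hj hjm => ?_, ?_⟩
  · obtain ⟨k, rfl⟩ := Nat.exists_eq_add_of_le' hj
    rw [hval k (by omega), hvan k (by omega), mul_zero]
  · rwa [hval m le_rfl, Ne, neg_one_pow_mul_eq_zero_iff]

end IsSigmaSeq

theorem statement_12_general
    (b₁ b₂ : ℝ)
    (Q12 Q21 : ℝ → ℂ)
    (n : ℕ)
    (hQ12 : MemW1 n Q12) (hQ21 : MemW1 n Q21)
    (qp qm : ℝ → ℂ)
    (hqp : qp = fun x => -Complex.I * (b₁ : ℂ) * Q12 x)
    (hqm : qm = fun x => -Complex.I * (b₂ : ℂ) * Q21 x)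
    (σp σm : ℕ → ℝ → ℂ)
    (hσp1 : ∀ x ∈ I01, σp 1 x = qm x)
    (hσm1 : ∀ x ∈ I01, σm 1 x = qp x)
    (hσpRec : ∀ k, 1 ≤ k → k + 1 ≤ n → ∀ x ∈ I01,
      σp (k + 1) x = -(derivWithin (σp k) I01 x)
        - qp x * ∑ j ∈ Finset.Icc 1 (k - 1), σp j x * σp (k - j) x)
    (hσmRec : ∀ k, 1 ≤ k → k + 1 ≤ n → ∀ x ∈ I01,
      σm (k + 1) x = -(derivWithin (σm k) I01 x)
        - qm x * ∑ j ∈ Finset.Icc 1 (k - 1), σm j x * σm (k - j) x)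
    (A : ℝ) (hA : A ∈ I01) (m : ℕ) (hm : m < n) :
    ((∀ j < m, iteratedDerivWithin j qm I01 A = 0) →
      iteratedDerivWithin m qm I01 A ≠ 0 →
      (∀ j, 1 ≤ j → j ≤ m → σp j A = 0) ∧ σp (m + 1) A ≠ 0) ∧
    ((∀ j < m, iteratedDerivWithin j qp I01 A = 0) →
      iteratedDerivWithin m qp I01 A ≠ 0 →
      (∀ j, 1 ≤ j → j ≤ m → σm j A = 0) ∧ σm (m + 1) A ≠ 0) := by
  have hs : UniqueDiffOn ℝ I01 := uniqueDiffOn_Icc zero_lt_one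
  have hqp' : ContDiffOn ℝ (n - 1 : ℕ) qp I01 := hqp ▸ contDiffOn_const.mul hQ12.1
  have hqm' : ContDiffOn ℝ (n - 1 : ℕ) qm I01 := hqm ▸ contDiffOn_const.mul hQ21.1
  have hσp : IsSigmaSeq I01 n qm qp σp := ⟨hσp1, hσpRec⟩
  have hσm : IsSigmaSeq I01 n qp qm σm := ⟨hσm1, hσmRec⟩
  exact ⟨hσp.eq_zero_and_ne_zero hs hqm' hqp' hA hm, hσm.eq_zero_and_ne_zero hs hqp' hqm' hA hm⟩

/-- Corollary: vanishing and non-vanishing of `σ_j^±(a)`. -/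
theorem statement_12
    (b₁ b₂ : ℝ) (hb₁ : b₁ < 0) (hb₂ : 0 < b₂)
    (Q12 Q21 : ℝ → ℂ)
    (n : ℕ) (hn : 1 ≤ n)
    (hQ12 : MemW1 n Q12) (hQ21 : MemW1 n Q21)
    (qp qm : ℝ → ℂ)
    (hqp : qp = fun x => -Complex.I * (b₁ : ℂ) * Q12 x)
    (hqm : qm = fun x => -Complex.I * (b₂ : ℂ) * Q21 x)
    (σp σm : ℕ → ℝ → ℂ)
    (hσp1 : ∀ x ∈ I01, σp 1 x = qm x)
    (hσm1 : ∀ x ∈ I01, σm 1 x = qp x)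
    (hσpRec : ∀ k, 1 ≤ k → k + 1 ≤ n → ∀ x ∈ I01,
      σp (k + 1) x = -(derivWithin (σp k) I01 x)
        - qp x * ∑ j ∈ Finset.Icc 1 (k - 1), σp j x * σp (k - j) x)
    (hσmRec : ∀ k, 1 ≤ k → k + 1 ≤ n → ∀ x ∈ I01,
      σm (k + 1) x = -(derivWithin (σm k) I01 x)
        - qm x * ∑ j ∈ Finset.Icc 1 (k - 1), σm j x * σm (k - j) x)
    (A : ℝ) (hA : A ∈ I01) (m : ℕ) (hm : m < n) :
    ((∀ j < m, iteratedDerivWithin j qm I01 A = 0) →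
      iteratedDerivWithin m qm I01 A ≠ 0 →
      (∀ j, 1 ≤ j → j ≤ m → σp j A = 0) ∧ σp (m + 1) A ≠ 0) ∧
    ((∀ j < m, iteratedDerivWithin j qp I01 A = 0) →
      iteratedDerivWithin m qp I01 A ≠ 0 →
      (∀ j, 1 ≤ j → j ≤ m → σm j A = 0) ∧ σm (m + 1) A ≠ 0) :=
  statement_12_general b₁ b₂ Q12 Q21 n hQ12 hQ21 qp qm hqp hqm σp σm hσp1 hσm1 hσpRec hσmRec A hA m
    hm
end
end
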